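/- Let R be a commutative noetherian ring and let p ∈ Spec(R). Then the small co-support of the injective hull E_R(R/p) is co-supp_R(E_R(R/p)) = {q ∈ Spec(R) : q ⊆ p}. -/

import Mathlib

/-! Preamble: a chain-level model of the derived category `D(R)` of a commutative
noetherian ring, following the conventions of the paper.  Objects of `D(R)` are
modelled by (unbounded) cochain complexes of `R`-modules (with the homological
indexing of the paper corresponding to `X_i = X^{-i}`), morphisms in `D(R)` by
morphisms of complexes, isomorphisms in `D(R)` by quasi-isomorphisms, and
`X ≃ 0` by acyclicity.  Derived functors are computed via resolutions:
semiflat/semiinjective resolutions are quantified (following the definitions of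
the paper), while for modules we use chosen projective resolutions. -/

open CategoryTheory Limits HomologicalComplex MonoidalCategory

set_option synthInstance.maxHeartbeats 1000000
set_option maxHeartbeats 4000000

noncomputable section

variable {R : Type} [CommRing R]

/-- Cochain complexes of `R`-modules, the model for objects of `D(R)`. -/
abbrev Cplx (R : Type) [CommRing R] := HomologicalComplex (ModuleCat.{0} R) (ComplexShape.up ℤ)

section Monoidal

instance (X : ModuleCat.{0} R) :
    PreservesColimitsOfSize.{0,0} ((curriedTensor (ModuleCat.{0} R)).obj X) :=
  (inferInstance : PreservesColimits (tensorLeft X))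

instance (X : ModuleCat.{0} R) :
    PreservesColimitsOfSize.{0,0} ((curriedTensor (ModuleCat.{0} R)).flip.obj X) :=
  have e : tensorLeft X ≅ (curriedTensor (ModuleCat.{0} R)).flip.obj X :=
    NatIso.ofComponents (fun Y => β_ X Y) (by intros; simp)
  preservesColimits_of_natIso e

instance : (curriedTensor (ModuleCat.{0} R)).Additive where
  map_add := by intros; ext Z; simp [curriedTensor]

instance (X : ModuleCat.{0} R) : ((curriedTensor (ModuleCat.{0} R)).obj X).Additive :=
  (inferInstance : (tensorLeft X).Additive)

instance : MonoidalCategory (Cplx R) := inferInstance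

end Monoidal

/-- A complex is acyclic exactly when it is isomorphic to `0` in `D(R)`. -/
def Acyc (X : Cplx R) : Prop := ∀ n : ℤ, IsZero (X.homology n)

/-- The complex with a module `M` concentrated in (co)homological degree `0`. -/
def sMod (M : ModuleCat.{0} R) : Cplx R :=
  (HomologicalComplex.single (ModuleCat.{0} R) (ComplexShape.up ℤ) 0).obj M

/-- A chosen projective resolution of a module `M`, regarded as a `ℤ`-indexed
cochain complex of projectives concentrated in degrees `≤ 0`; this is a semiflat
(indeed semiprojective) resolution of `M`, so that `resC M ⊗ X` computes
`M ⊗^L X` and `homCplx (resC M) X` computes `RHom(M, X)`. -/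
def resC (M : ModuleCat.{0} R) : Cplx R :=
  ((HasProjectiveResolution.out (Z := M)).some.complex).extend
    ComplexShape.embeddingDownNat

open CochainComplex.HomComplex in
/-- The `Hom`-complex `Hom(F, G)` of two complexes, as a complex of `R`-modules. -/
def homCplx (F G : Cplx R) : Cplx R where
  X n := ModuleCat.of R (Cochain F G n)
  d i j := ModuleCat.ofHom (δ_hom R F G i j)
  shape i j hij := ModuleCat.hom_ext (LinearMap.ext fun z => δ_shape i j hij z)
  d_comp_d' i j k _ _ := ModuleCat.hom_ext (LinearMap.ext fun z => δ_δ i j k z)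

open CochainComplex.HomComplex in
/-- Covariant functoriality of the `Hom`-complex in the second variable. -/
def homCplxMapRight (F : Cplx R) {X Y : Cplx R} (g : X ⟶ Y) :
    homCplx F X ⟶ homCplx F Y where
  f n := ModuleCat.ofHom {
    toFun := fun z => z.comp (Cochain.ofHom g) (add_zero n)
    map_add' := fun z₁ z₂ => Cochain.add_comp z₁ z₂ (Cochain.ofHom g) (add_zero n)
    map_smul' := fun r z => Cochain.smul_comp r z (Cochain.ofHom g) (add_zero n) }
  comm' := by
    rintro i j (rfl : i + 1 = j)
    refine ModuleCat.hom_ext (LinearMap.ext (fun (z : Cochain F X i) => ?_))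
    show δ i (i + 1) (z.comp (Cochain.ofHom g) (add_zero i))
      = (δ i (i + 1) z).comp (Cochain.ofHom g) (add_zero (i + 1))
    rw [δ_comp_zero_cochain z (Cochain.ofHom g) (i + 1) rfl, δ_ofHom,
      Cochain.comp_zero, zero_add]

open CochainComplex.HomComplex in
/-- Contravariant functoriality of the `Hom`-complex in the first variable. -/
def homCplxMapLeft {A B : Cplx R} (g : A ⟶ B) (I : Cplx R) :
    homCplx B I ⟶ homCplx A I where
  f n := ModuleCat.ofHom {
    toFun := fun z => (Cochain.ofHom g).comp z (zero_add n)
    map_add' := fun z₁ z₂ => Cochain.comp_add (Cochain.ofHom g) z₁ z₂ (zero_add n)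
    map_smul' := fun r z => Cochain.comp_smul (Cochain.ofHom g) r z (zero_add n) }
  comm' := by
    rintro i j (rfl : i + 1 = j)
    refine ModuleCat.hom_ext (LinearMap.ext (fun (z : Cochain B I i) => ?_))
    show δ i (i + 1) ((Cochain.ofHom g).comp z (zero_add i))
      = (Cochain.ofHom g).comp (δ i (i + 1) z) (zero_add (i + 1))
    rw [δ_zero_cochain_comp (Cochain.ofHom g) z (i + 1) rfl, δ_ofHom,
      Cochain.zero_comp, smul_zero, add_zero]

/-- The paper's notion of a *semiflat* complex: tensoring with it preserves
injective quasi-isomorphisms. -/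
def Semiflat (F : Cplx R) : Prop :=
  ∀ ⦃A B : Cplx R⦄ (g : A ⟶ B), (∀ n, Mono (g.f n)) → QuasiIso g → QuasiIso (F ◁ g)

/-- `π : F ⟶ X` is a semiflat resolution of `X`. -/
def IsSemiflatResolution {F X : Cplx R} (π : F ⟶ X) : Prop :=
  Semiflat F ∧ QuasiIso π

/-- The paper's notion of a *semiinjective* complex: `Hom(-, I)` converts
injective quasi-isomorphisms into surjective quasi-isomorphisms. -/
def Semiinjective (I : Cplx R) : Prop :=
  ∀ ⦃A B : Cplx R⦄ (g : A ⟶ B), (∀ n, Mono (g.f n)) → QuasiIso g →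
    (∀ n, Epi ((homCplxMapLeft g I).f n)) ∧ QuasiIso (homCplxMapLeft g I)

/-- `ι : X ⟶ I` is a semiinjective resolution of `X`. -/
def IsSemiinjectiveResolution {X I : Cplx R} (ι : X ⟶ I) : Prop :=
  Semiinjective I ∧ QuasiIso ι

/-- The residue field `κ(p) = R_p / p R_p` of a prime `p`, as an `R`-module. -/
def kappa (p : PrimeSpectrum R) : ModuleCat.{0} R :=
  ModuleCat.of R (LocalizedModule p.asIdeal.primeCompl (R ⧸ p.asIdeal))

/-- The small support of a complex: the set of primes `p` with `κ(p) ⊗^L X ≄ 0`,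
the derived tensor product being computed via the chosen (semiflat) projective
resolution of `κ(p)`. -/
def supp (X : Cplx R) : Set (PrimeSpectrum R) :=
  {p | ¬ Acyc (resC (kappa p) ⊗ X)}

/-- The small co-support of a complex: the set of primes `p` with
`RHom(κ(p), X) ≄ 0`, the derived `Hom` being computed via the chosen
(semiprojective) projective resolution of `κ(p)`. -/
def cosupp (X : Cplx R) : Set (PrimeSpectrum R) :=
  {p | ¬ Acyc (homCplx (resC (kappa p)) X)}

/-- The large support of a complex: the set of primes `p` with `X_p ≄ 0` in
`D(R_p)`, the localization being computed degreewise. -/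
def locCplx (p : PrimeSpectrum R) (X : Cplx R) :
    HomologicalComplex (ModuleCat.{0} (Localization.AtPrime p.asIdeal)) (ComplexShape.up ℤ) :=
  ((ModuleCat.extendScalars
    (algebraMap R (Localization.AtPrime p.asIdeal))).mapHomologicalComplex
      (ComplexShape.up ℤ)).obj X

def BigSupp (X : Cplx R) : Set (PrimeSpectrum R) :=
  {p | ¬ ∀ n : ℤ, IsZero ((locCplx p X).homology n)}



/-- The `a`-torsion submodule `Γ_a(M) = {m | a^n m = 0 for some n}`. -/
def torsionSubmodule (a : Ideal R) (M : Type) [AddCommGroup M] [Module R M] :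
    Submodule R M where
  carrier := {m | ∃ n : ℕ, ∀ r ∈ a ^ n, r • m = 0}
  zero_mem' := ⟨0, fun r _ => smul_zero r⟩
  add_mem' := by
    rintro x y ⟨n, hn⟩ ⟨m, hm⟩
    refine ⟨n + m, fun r hr => ?_⟩
    rw [smul_add, hn r (Ideal.pow_le_pow_right (by omega) hr),
      hm r (Ideal.pow_le_pow_right (by omega) hr), add_zero]
  smul_mem' := by
    rintro c x ⟨n, hn⟩
    exact ⟨n, fun r hr => by rw [smul_comm, hn r hr, smul_zero]⟩

/-- The `a`-torsion functor `Γ_a` on `R`-modules. -/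
def torsionFunctor (a : Ideal R) : ModuleCat.{0} R ⥤ ModuleCat.{0} R where
  obj M := ModuleCat.of R (torsionSubmodule a M)
  map {M N} f := ModuleCat.ofHom (f.hom.restrict (p := torsionSubmodule a M) (q := torsionSubmodule a N)
    (fun x hx => by
      obtain ⟨n, hn⟩ := hx
      exact ⟨n, fun r hr => by rw [← map_smul, hn r hr, map_zero]⟩))
  map_id := by intros; ext x; rfl
  map_comp := by intros; ext x; rfl

instance (a : Ideal R) : (torsionFunctor a).Additive where
  map_add := by intros; ext x; apply Subtype.ext; rfl

/-- The inclusion `Γ_a(I) ⟶ I` for a complex `I`, applied degreewise. -/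
def torsionComplexIncl (a : Ideal R) (I : Cplx R) :
    ((torsionFunctor a).mapHomologicalComplex (ComplexShape.up ℤ)).obj I ⟶ I where
  f n := ModuleCat.ofHom (torsionSubmodule a (I.X n)).subtype
  comm' := by intros; ext x; rfl

theorem adicCompletionMap_add (a : Ideal R) {M N : Type} [AddCommGroup M] [Module R M]
    [AddCommGroup N] [Module R N] (f g : M →ₗ[R] N) :
    AdicCompletion.map a (f + g) = AdicCompletion.map a f + AdicCompletion.map a g := by
  ext x
  simp [AdicCompletion.map_val_apply]

/-- The `a`-adic completion functor `Λ^a` on `R`-modules. -/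
def cmplFunctor (a : Ideal R) : ModuleCat.{0} R ⥤ ModuleCat.{0} R where
  obj M := ModuleCat.of R (AdicCompletion a M)
  map {M N} f := ModuleCat.ofHom ((AdicCompletion.map a f.hom).restrictScalars R)
  map_id M := ModuleCat.hom_ext (congrArg (LinearMap.restrictScalars R) (AdicCompletion.map_id a M))
  map_comp {M N P} f g :=
    ModuleCat.hom_ext (congrArg (LinearMap.restrictScalars R) (AdicCompletion.map_comp (I := a) f.hom g.hom).symm)

instance (a : Ideal R) : (cmplFunctor a).Additive where
  map_add {M N f g} := ModuleCat.hom_ext (congrArg (LinearMap.restrictScalars R) (adicCompletionMap_add a f.hom g.hom))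

/-- The natural map `F ⟶ Λ^a(F)` for a complex `F`, applied degreewise. -/
def cmplUnitHom (a : Ideal R) (F : Cplx R) :
    F ⟶ ((cmplFunctor a).mapHomologicalComplex (ComplexShape.up ℤ)).obj F where
  f n := ModuleCat.ofHom (AdicCompletion.of a (F.X n))
  comm' := by
    intros
    ext x
    exact AdicCompletion.ext (fun n => rfl)

/-- The `a`-adic completion functor, taking values in modules over the
completed ring `R̂ = AdicCompletion a R`. -/
def cmplHatFunctor (a : Ideal R) : ModuleCat.{0} R ⥤ ModuleCat.{0} (AdicCompletion a R) where
  obj M := ModuleCat.of (AdicCompletion a R) (AdicCompletion a M)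
  map {M N} f := ModuleCat.ofHom (AdicCompletion.map a f.hom)
  map_id M := ModuleCat.hom_ext (AdicCompletion.map_id a M)
  map_comp {M N P} f g := ModuleCat.hom_ext (AdicCompletion.map_comp (I := a) f.hom g.hom).symm

instance (a : Ideal R) : (cmplHatFunctor a).Additive where
  map_add {M N f g} := ModuleCat.hom_ext (adicCompletionMap_add a f.hom g.hom)


/-- The Koszul complex on one element `x`, i.e. `R --x--> R` in (co)homological
degrees `-1, 0`: the mapping cone of multiplication by `x` on `R`. -/
def kosOne (x : R) : Cplx R :=
  CochainComplex.mappingCone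
    ((HomologicalComplex.single (ModuleCat.{0} R) (ComplexShape.up ℤ) 0).map
      (x • 𝟙 (ModuleCat.of R R)))

/-- The Koszul complex `K^R(x₁, …, xₙ)` on a finite sequence of elements. -/
def koszul (xs : List R) : Cplx R :=
  xs.foldr (fun x K => kosOne x ⊗ K) (𝟙_ (Cplx R))

/-- `X ∈ D_+(S)`: homology bounded below (homologically), i.e. `H_i(X) = 0` for
`i ≪ 0`; in our cohomological indexing, `H^n = 0` for `n ≫ 0`. -/
def Dplus {S : Type} [CommRing S] (X : Cplx S) : Prop :=
  ∃ N : ℤ, ∀ n ≥ N, IsZero (X.homology n)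

/-- `X ∈ D_-(S)`: `H_i(X) = 0` for `i ≫ 0`. -/
def Dminus {S : Type} [CommRing S] (X : Cplx S) : Prop :=
  ∃ N : ℤ, ∀ n ≤ N, IsZero (X.homology n)

/-- `X ∈ D_b(S)`. -/
def Dbdd {S : Type} [CommRing S] (X : Cplx S) : Prop := Dplus X ∧ Dminus X

/-- `X ∈ D^f(S)`: all homology modules are finitely generated. -/
def FgH {S : Type} [CommRing S] (X : Cplx S) : Prop :=
  ∀ n : ℤ, Module.Finite S (X.homology n)

/-- `V(a)`: the primes containing the ideal `a`. -/
def primeV (a : Ideal R) : Set (PrimeSpectrum R) := PrimeSpectrum.zeroLocus (a : Set R)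

/-- A submodule is essential if it intersects every nonzero submodule nontrivially. -/
def IsEssentialSubmodule {M : Type} [AddCommGroup M] [Module R M]
    (E : Submodule R M) : Prop :=
  ∀ N : Submodule R M, N ⊓ E = ⊥ → N = ⊥

/-- `ι : X ⟶ J` is an injective resolution of `X`: a quasi-isomorphism into a
bounded-below complex of injective modules. -/
def IsInjectiveResolution {X J : Cplx R} (ι : X ⟶ J) : Prop :=
  QuasiIso ι ∧ (∀ n, Injective (J.X n)) ∧ ∃ N : ℤ, ∀ n < N, IsZero (J.X n)

/-- An injective resolution is minimal if the kernel of each differential is an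
essential submodule. -/
def IsMinimal (J : Cplx R) : Prop :=
  ∀ n : ℤ, IsEssentialSubmodule (LinearMap.ker (J.d n (n + 1)).hom)

/-- `E` is an injective hull of the module `M`: `E` is injective and contains a
copy of `M` as an essential submodule. -/
def IsInjectiveHull (M E : ModuleCat.{0} R) : Prop :=
  Injective E ∧ ∃ f : M ⟶ E, Function.Injective f ∧
    IsEssentialSubmodule (LinearMap.range f.hom)

/-- `E` occurs as a direct summand of the module `M`. -/
def IsSummand (E M : ModuleCat.{0} R) : Prop :=
  ∃ (i : E ⟶ M) (r : M ⟶ E), i ≫ r = 𝟙 E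

open CochainComplex.HomComplex in
/-- The homothety morphism `R ⟶ Hom(C, J)`, sending `r` to `r • ι`, where
`ι : C ⟶ J`; when `ι` is a semiinjective resolution of `C`, this represents
the natural homothety morphism `R → RHom(C, C)` in `D(R)`. -/
def homothetyHom (C J : Cplx R) (ι : C ⟶ J) :
    sMod (ModuleCat.of R R) ⟶ homCplx C J :=
  HomologicalComplex.mkHomFromSingle
    (show ModuleCat.of R R ⟶ (homCplx C J).X 0 from
      ModuleCat.ofHom (LinearMap.toSpanSingleton R _ (Cochain.ofHom ι)))
    (fun k _ => ModuleCat.hom_ext (LinearMap.ext (fun (r : R) =>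
      show δ 0 k (r • Cochain.ofHom ι) = 0 by rw [δ_smul, δ_ofHom, smul_zero])))

/-- A dualizing complex for `R`: a semidualizing complex (i.e. one for which the
homothety morphism `R → RHom(D, D)` is an isomorphism in `D(R)`) in `D^f_b(R)`
of finite injective dimension; the finite injective dimension and the
computation of `RHom(D, D)` are both witnessed by a bounded injective
resolution `J` of `D`. -/
def IsDualizing (D : Cplx R) : Prop :=
  Dbdd D ∧ FgH D ∧
    ∃ (J : Cplx R) (ι : D ⟶ J), QuasiIso ι ∧ (∀ n, Injective (J.X n)) ∧
      (∃ N₀ N₁ : ℤ, ∀ n, (n < N₀ ∨ N₁ < n) → IsZero (J.X n)) ∧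
      QuasiIso (homothetyHom D J ι)

/-- `M ∈ D_b(R)` is `a`-adically finite: `RHom(R/a, M) ∈ D^f(R)` and
`supp M ⊆ V(a)`. -/
def AdicallyFinite (a : Ideal R) (M : Cplx R) : Prop :=
  Dbdd M ∧ FgH (homCplx (resC (ModuleCat.of R (R ⧸ a))) M) ∧ supp M ⊆ primeV a

end

/-! Because `E` is injective and `κ(q)` is resolved by projectives, `RHom(κ(q), E)` is
`Hom(κ(q), E)` placed in degree `0`, so `q` lies in the co-support exactly when
`Hom(κ(q), E) ≠ 0`. If `q ⊄ p`, an element `x ∈ q \ p` annihilates `κ(q)` but is regular on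
`R/p`, hence on its essential extension `E`, so every such map vanishes. If `q ⊆ p`, the nonzero
map `R/q → R/p → E` extends along the injection `R/q → κ(q)` because `E` is injective. -/

lemma CategoryTheory.Limits.CokernelCofork.IsColimit.forall_eq_zero_iff {C : Type*} [Category C]
    [Preadditive C] {A B : C} {f : A ⟶ B} {c : CokernelCofork f} (hc : IsColimit c) (E : C) :
    (∀ g : B ⟶ E, f ≫ g = 0 → g = 0) ↔ ∀ φ : c.pt ⟶ E, φ = 0 := by
  refine ⟨fun h φ => ?_, fun h g hg => ?_⟩
  · have := Cofork.IsColimit.epi hc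
    exact (cancel_epi c.π).1 ((h _ (by rw [c.condition_assoc, zero_comp])).trans comp_zero.symm)
  · obtain ⟨φ, hφ⟩ := CokernelCofork.IsColimit.desc' hc g hg
    rw [← hφ, h φ, comp_zero]

namespace CategoryTheory.ProjectiveResolution

variable {C : Type*} [Category C] [Abelian C] {X : C} (P : ProjectiveResolution X)

lemma exactAt_cochainComplex {j : ℤ} (hj : j ≠ 0) : P.cochainComplex.ExactAt j := by
  rcases hj.lt_or_gt with hj | hj
  · exact P.cochainComplex.exactAt_of_isGE 0 j
  · exact P.cochainComplex.exactAt_of_isLE 0 j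

noncomputable def isColimitCokernelCoforkCochainComplex :
    IsColimit (CokernelCofork.ofπ (f := P.cochainComplex.d (-1) 0)
      ((P.cochainComplexXIso 0 0).hom ≫ P.π.f 0) (by
        rw [P.cochainComplex_d (-1) 0 1 0]
        simp only [Category.assoc, Iso.inv_hom_id_assoc, complex_d_comp_π_f_zero, comp_zero])) :=
  IsCokernel.ofIso _ P.isColimitCokernelCofork _ (P.cochainComplexXIso (-1) 1).symm
    (P.cochainComplexXIso 0 0).symm (Iso.refl _)
    (by simp [P.cochainComplex_d (-1) 0 1 0]) (by simp; rfl)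

end CategoryTheory.ProjectiveResolution

section

open CochainComplex.HomComplex

variable {R : Type} [CommRing R]

-- A degree-`n` cochain into `E` placed in degree `0` is a single map `F.X (-n) ⟶ E`, and its
-- differential is precomposition with `F.d` up to sign.
lemma exactAt_homCplx_sMod_iff (F : Cplx R) (E : ModuleCat.{0} R) (n : ℤ) :
    (homCplx F (sMod E)).ExactAt n ↔
      ∀ f : F.X (-n) ⟶ E, F.d (-n - 1) (-n) ≫ f = 0 →
        ∃ g : F.X (-n + 1) ⟶ E, F.d (-n) (-n + 1) ≫ g = f := by
  rw [(homCplx F (sMod E)).exactAt_iff' (n - 1) n (n + 1) (by simp) (by simp),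
    ShortComplex.moduleCat_exact_iff,
    show sMod E = (CochainComplex.singleFunctor (ModuleCat.{0} R) 0).obj E from rfl]
  have hcob (f : F.X (-n) ⟶ E) (hf : F.d (-n - 1) (-n) ≫ f = 0) :=
    (mem_coboundaries_iff _ (n - 1) (by omega)).symm.trans
      (Cocycle.toSingleMk_mem_coboundaries_iff f (neg_add_cancel n) _ (by omega) hf _ rfl)
  constructor
  · intro hex f hf
    exact (hcob f hf).1 (hex _ (Cocycle.δ_eq_zero _ _))
  · intro h z hz
    obtain ⟨f, hf, hfz⟩ := Cocycle.toSingleMk_surjective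
      ⟨z, (Cocycle.mem_iff n (n + 1) rfl z).2 hz⟩ (-n) (neg_add_cancel n) (-n - 1) (by omega)
    obtain ⟨w, hw⟩ := (hcob f hf).2 (h f hf)
    exact ⟨w, hw.trans (congrArg Subtype.val hfz)⟩

lemma exactAt_homCplx_sMod_of_exactAt {F : Cplx R} {E : ModuleCat.{0} R} [Injective E] {n : ℤ}
    (hF : F.ExactAt (-n)) : (homCplx F (sMod E)).ExactAt n := by
  have hS := (F.exactAt_iff' (-n - 1) (-n) (-n + 1) (by simp) (by simp)).1 hF
  exact (exactAt_homCplx_sMod_iff F E n).2 fun f hf =>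
    ⟨hS.descToInjective f hf, hS.comp_descToInjective f hf⟩

lemma exactAt_zero_homCplx_cochainComplex_sMod_iff {M : ModuleCat.{0} R}
    (P : ProjectiveResolution M) (E : ModuleCat.{0} R) :
    (homCplx P.cochainComplex (sMod E)).ExactAt 0 ↔ ∀ φ : M ⟶ E, φ = 0 := by
  have hX : IsZero (P.cochainComplex.X 1) := P.cochainComplex.isZero_of_isStrictlyLE 0 1
  rw [exactAt_homCplx_sMod_iff, neg_zero, zero_sub, zero_add]
  refine Iff.trans ?_
    (CokernelCofork.IsColimit.forall_eq_zero_iff P.isColimitCokernelCoforkCochainComplex E)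
  refine forall_congr' fun f => imp_congr_right fun _ => ⟨?_, fun hf => ⟨0, ?_⟩⟩
  · rintro ⟨g, rfl⟩
    rw [hX.eq_of_src g 0, comp_zero]
  · exact comp_zero.trans hf.symm

lemma acyc_homCplx_cochainComplex_sMod_iff {M : ModuleCat.{0} R} (P : ProjectiveResolution M)
    (E : ModuleCat.{0} R) [Injective E] :
    Acyc (homCplx P.cochainComplex (sMod E)) ↔ ∀ φ : M ⟶ E, φ = 0 := by
  simp only [Acyc, ← exactAt_iff_isZero_homology]
  refine ⟨fun h => (exactAt_zero_homCplx_cochainComplex_sMod_iff P E).1 (h 0), fun h n => ?_⟩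
  rcases eq_or_ne n 0 with rfl | hn
  · exact (exactAt_zero_homCplx_cochainComplex_sMod_iff P E).2 h
  · exact exactAt_homCplx_sMod_of_exactAt (P.exactAt_cochainComplex (neg_ne_zero.2 hn))

lemma mem_cosupp_sMod_iff {E : ModuleCat.{0} R} [Injective E] {q : PrimeSpectrum R} :
    q ∈ cosupp (sMod E) ↔ ∃ φ : kappa q ⟶ E, φ ≠ 0 := by
  simp only [cosupp, Set.mem_ofPred_eq, resC]
  rw [← ProjectiveResolution.cochainComplex, acyc_homCplx_cochainComplex_sMod_iff, not_forall]

lemma isSMulRegular_quotient_of_notMem {p : Ideal R} [p.IsPrime] {x : R} (hx : x ∉ p) :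
    IsSMulRegular (R ⧸ p) x :=
  (isSMulRegular_quotient_iff_mem_of_smul_mem p x).2 fun _ hy =>
    (Ideal.IsPrime.mem_or_mem ‹_› hy).resolve_left hx

lemma IsEssentialSubmodule.isSMulRegular {M : Type} [AddCommGroup M] [Module R M]
    {N : Submodule R M} (hN : IsEssentialSubmodule N) {x : R} (hx : IsSMulRegular N x) :
    IsSMulRegular M x := by
  rw [isSMulRegular_iff_ker_lsmul_eq_bot]
  exact hN _ (disjoint_iff.1
    ((isSMulRegular_on_submodule_iff_disjoint_ker_lsmul_submodule _ _).1 hx))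

lemma IsInjectiveHull.isSMulRegular {M E : ModuleCat.{0} R} (hE : IsInjectiveHull M E) {x : R}
    (hx : IsSMulRegular M x) : IsSMulRegular E x := by
  obtain ⟨-, f, hf, hess⟩ := hE
  exact IsEssentialSubmodule.isSMulRegular hess
    (hx.of_injective (LinearEquiv.ofInjective f.hom hf).symm (LinearEquiv.injective _))

lemma LocalizedModule.smul_quotient_eq_zero_of_mem (S : Submonoid R) {I : Ideal R} {x : R}
    (hx : x ∈ I) (m : LocalizedModule S (R ⧸ I)) : x • m = 0 := by
  induction m using LocalizedModule.induction_on with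
  | h a s =>
    obtain ⟨r, rfl⟩ := Ideal.Quotient.mk_surjective a
    rw [LocalizedModule.smul'_mk, Algebra.smul_def, Ideal.Quotient.algebraMap_eq, ← map_mul,
      Ideal.Quotient.eq_zero_iff_mem.2 (Ideal.mul_mem_right r _ hx), LocalizedModule.zero_mk]

lemma injective_mkLinearMap_kappa (q : PrimeSpectrum R) :
    Function.Injective (LocalizedModule.mkLinearMap q.asIdeal.primeCompl (R ⧸ q.asIdeal)) :=
  (IsLocalizedModule.injective_iff_isRegular _ _).2 fun s : q.asIdeal.primeCompl =>
    isSMulRegular_quotient_of_notMem s.2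

lemma hom_kappa_eq_zero_of_not_le {p q : PrimeSpectrum R} {E : ModuleCat.{0} R}
    (hE : IsInjectiveHull (ModuleCat.of R (R ⧸ p.asIdeal)) E) (hqp : ¬ q.asIdeal ≤ p.asIdeal)
    (f : kappa q ⟶ E) : f = 0 := by
  obtain ⟨x, hxq, hxp⟩ := SetLike.not_le_iff_exists.1 hqp
  have hreg := hE.isSMulRegular (isSMulRegular_quotient_of_notMem hxp)
  ext m
  refine hreg.right_eq_zero_of_smul ?_
  rw [← map_smul, show x • m = 0 from LocalizedModule.smul_quotient_eq_zero_of_mem _ hxq m,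
    map_zero]

lemma exists_hom_kappa_ne_zero_of_le {p q : PrimeSpectrum R} {E : ModuleCat.{0} R}
    (hE : IsInjectiveHull (ModuleCat.of R (R ⧸ p.asIdeal)) E) (hqp : q.asIdeal ≤ p.asIdeal) :
    ∃ f : kappa q ⟶ E, f ≠ 0 := by
  obtain ⟨_, f, hf, -⟩ := hE
  let ι : ModuleCat.of R (R ⧸ q.asIdeal) ⟶ kappa q :=
    ModuleCat.ofHom (LocalizedModule.mkLinearMap _ _)
  have : Mono ι := (ModuleCat.mono_iff_injective _).2 (injective_mkLinearMap_kappa q)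
  let g : ModuleCat.of R (R ⧸ q.asIdeal) ⟶ E :=
    ModuleCat.ofHom (f.hom ∘ₗ (Ideal.Quotient.factorₐ R hqp).toLinearMap)
  have hg : g ≠ 0 := fun hg => by
    have h1 : f.hom (Ideal.Quotient.mk p.asIdeal 1) = 0 := congrArg (fun φ => φ.hom 1) hg
    exact p.isPrime.ne_top <| (Ideal.eq_top_iff_one _).2 <|
      Ideal.Quotient.eq_zero_iff_mem.1 (hf (h1.trans (map_zero _).symm))
  refine ⟨Injective.factorThru g ι, fun h => hg ?_⟩
  rw [← Injective.comp_factorThru g ι, h, comp_zero]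

end

theorem statement13_general {R : Type} [CommRing R]
    (p : PrimeSpectrum R) (E : ModuleCat.{0} R)
    (hE : IsInjectiveHull (ModuleCat.of R (R ⧸ p.asIdeal)) E) :
    cosupp (sMod E) = {q : PrimeSpectrum R | q.asIdeal ≤ p.asIdeal} := by
  have : Injective E := hE.1
  ext q
  rw [mem_cosupp_sMod_iff, Set.mem_ofPred_eq]
  exact ⟨fun ⟨f, hf⟩ => by_contra fun hqp => hf (hom_kappa_eq_zero_of_not_le hE hqp f),
    exists_hom_kappa_ne_zero_of_le hE⟩

theorem statement13 {R : Type} [CommRing R] [IsNoetherianRing R]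
    (p : PrimeSpectrum R) (E : ModuleCat.{0} R)
    (hE : IsInjectiveHull (ModuleCat.of R (R ⧸ p.asIdeal)) E) :
    cosupp (sMod E) = {q : PrimeSpectrum R | q.asIdeal ≤ p.asIdeal} :=
  statement13_general p E hE
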